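/- arXiv:2503.21071 — 7 statements merged into one kernel-verified Lean document; each statement's English description precedes it below -/
import Mathlib

section
/- Let d ≥ 1, q ≥ 1, ε' > 0, δ ∈ (0,1), ω ∈ (0,1), and let Θ ⊆ ℝ^d be a closed ℓq-ball of diameter R > 0. Set Δ = 2·d^{1−1/q}·R·(δ/(2ω))^{1/d}. Let x_apx be a random point of Θ with law μ (any probability measure on Θ); let x equal x_apx with probability 1−ω and otherwise equal an independent uniform sample from Θ; and let x_pure = x + Z where Z ∼ Laplace^⊗d(2Δ/ε') is independent of everything else. Then E‖x_pure − x_apx‖_q ≤ ω·R + (4·R·d·q/ε')·(δ/(2ω))^{1/d}; in particular, for q = 1 one obtains E‖x_pure − x_apx‖₁ ≤ ω·R + (4·R·d/ε')·(δ/(2ω))^{1/d}. -/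
open MeasureTheory
open scoped ENNReal

noncomputable section

/-- The ℓq norm on ℝ^d. -/
def lqNorm {d : ℕ} (q : ℝ) (x : Fin d → ℝ) : ℝ := (∑ i, |x i| ^ q) ^ (1 / q)

/-- The closed ℓq-ball of radius `r` centered at `c` in ℝ^d. -/
def lqBall (d : ℕ) (q : ℝ) (c : Fin d → ℝ) (r : ℝ) : Set (Fin d → ℝ) :=
  {x | lqNorm q (x - c) ≤ r}

/-- The d-fold product of the Laplace(b) distribution on ℝ^d, given by its density. -/
def laplacePi (d : ℕ) (b : ℝ) : Measure (Fin d → ℝ) :=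
  volume.withDensity fun x => ENNReal.ofReal (∏ i, (1 / (2 * b)) * Real.exp (-|x i| / b))

/-- The uniform distribution (normalized Lebesgue measure) on a set Θ ⊆ ℝ^d. -/
def unifOn {d : ℕ} (Θ : Set (Fin d → ℝ)) : Measure (Fin d → ℝ) :=
  (volume Θ)⁻¹ • volume.restrict Θ

/-- The Bernoulli distribution on `Bool` putting mass `p` on `true` and `1-p` on `false`. -/
def bern (p : ℝ) : Measure Bool :=
  ENNReal.ofReal p • Measure.dirac true + ENNReal.ofReal (1 - p) • Measure.dirac false

/-!
By the triangle inequality, `‖x_pure - x_apx‖_q ≤ ‖x - x_apx‖_q + ‖Z‖_q`. The first term vanishes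
unless the coin selects the uniform sample (probability `ω`), and then it is at most the diameter
`R` of `Θ`. For the noise, Jensen's inequality and `E|Zᵢ|^q = b^q Γ(q+1) ≤ (b q)^q` (for `q ≥ 1`)
give `E‖Z‖_q ≤ (∑ᵢ E|Zᵢ|^q)^(1/q) ≤ d^(1/q) b q`, which for `b = 2Δ/ε'` is the second term.
-/

open Real Set

namespace Real

theorem integral_Ioi_rpow_mul_exp_neg_div {b q : ℝ} (hb : 0 < b) (hq : -1 < q) :
    ∫ t in Ioi (0 : ℝ), t ^ q * exp (-(t / b)) = b ^ (q + 1) * Gamma (q + 1) := by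
  have h := integral_rpow_mul_exp_neg_mul_Ioi (a := q + 1) (r := b⁻¹) (by linarith) (inv_pos.2 hb)
  rw [add_sub_cancel_right, one_div, inv_inv] at h
  simpa only [inv_mul_eq_div] using h

theorem integrableOn_Ioi_rpow_mul_exp_neg_div {b q : ℝ} (hb : 0 < b) (hq : -1 < q) :
    IntegrableOn (fun t : ℝ => t ^ q * exp (-(t / b))) (Ioi 0) := by
  refine (integrableOn_rpow_mul_exp_neg_mul_rpow hq one_pos (inv_pos.2 hb)).congr_fun
    (fun t _ => ?_) measurableSet_Ioi
  simp only [rpow_one, neg_mul, inv_mul_eq_div]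

/-- A majorant of the `Γ(q + 1)` integrand: `s ≤ exp (s - 1)` at `s = t / q`, raised to the
power `q - 1`. -/
theorem rpow_mul_exp_neg_le {q t : ℝ} (hq : 1 ≤ q) (ht : 0 ≤ t) :
    t ^ q * exp (-t) ≤ q ^ (q - 1) * exp (1 - q) * (t * exp (-(t / q))) := by
  have hq0 : 0 < q := by linarith
  have hsplit : t ^ q = q ^ (q - 1) * (t / q) ^ (q - 1) * t := by
    rw [← mul_rpow hq0.le (by positivity), mul_div_cancel₀ t hq0.ne',
      ← rpow_add_one' ht (by linarith), sub_add_cancel]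
  have hbase : (t / q) ^ (q - 1) ≤ exp ((t / q - 1) * (q - 1)) := by
    rw [exp_mul]
    exact rpow_le_rpow (by positivity) (by linarith [add_one_le_exp (t / q - 1)]) (by linarith)
  have hexp : exp ((t / q - 1) * (q - 1)) * exp (-t) = exp (1 - q) * exp (-(t / q)) := by
    rw [← exp_add, ← exp_add]
    congr 1
    field_simp
    ring
  calc t ^ q * exp (-t) = q ^ (q - 1) * t * ((t / q) ^ (q - 1) * exp (-t)) := by
        rw [hsplit]; ring
    _ ≤ q ^ (q - 1) * t * (exp ((t / q - 1) * (q - 1)) * exp (-t)) := by gcongr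
    _ = q ^ (q - 1) * exp (1 - q) * (t * exp (-(t / q))) := by rw [hexp]; ring

theorem Gamma_add_one_le_rpow_self {q : ℝ} (hq : 1 ≤ q) : Gamma (q + 1) ≤ q ^ q := by
  have hq0 : 0 < q := by linarith
  have hqexp : q * exp (1 - q) ≤ 1 :=
    calc q * exp (1 - q) ≤ exp (q - 1) * exp (1 - q) := by
          gcongr; linarith [add_one_le_exp (q - 1)]
      _ = 1 := by rw [← exp_add]; simp
  calc Gamma (q + 1) = ∫ t in Ioi 0, t ^ q * exp (-(t / 1)) := by
        rw [integral_Ioi_rpow_mul_exp_neg_div one_pos (by linarith), one_rpow, one_mul]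
    _ ≤ ∫ t in Ioi 0, q ^ (q - 1) * exp (1 - q) * (t ^ (1 : ℝ) * exp (-(t / q))) :=
        setIntegral_mono_on (integrableOn_Ioi_rpow_mul_exp_neg_div one_pos (by linarith))
          ((integrableOn_Ioi_rpow_mul_exp_neg_div hq0 (by norm_num)).const_mul _)
          measurableSet_Ioi fun t ht => by
            simpa only [div_one, rpow_one] using rpow_mul_exp_neg_le hq (le_of_lt ht)
    _ = q ^ q * (q * exp (1 - q)) := by
        rw [integral_const_mul, integral_Ioi_rpow_mul_exp_neg_div hq0 (by norm_num),
          one_add_one_eq_two, Gamma_two, rpow_sub_one hq0.ne', rpow_two]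
        field_simp
    _ ≤ q ^ q := mul_le_of_le_one_right (by positivity) hqexp

end Real

section LqNorm

variable {d : ℕ} {q : ℝ}

theorem measurable_lqNorm : Measurable (lqNorm (d := d) q) := by
  unfold lqNorm; fun_prop

theorem lqNorm_nonneg (x : Fin d → ℝ) : 0 ≤ lqNorm q x := by
  unfold lqNorm; positivity

theorem lqNorm_rpow (hq : q ≠ 0) (x : Fin d → ℝ) : lqNorm q x ^ q = ∑ i, |x i| ^ q := by
  rw [lqNorm, ← rpow_mul (by positivity), one_div_mul_cancel hq, rpow_one]

theorem lqNorm_zero (hq : 0 < q) : lqNorm q (0 : Fin d → ℝ) = 0 := by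
  simp [lqNorm, zero_rpow hq.ne', zero_rpow (inv_ne_zero hq.ne')]

theorem lqNorm_sub_comm (x y : Fin d → ℝ) : lqNorm q (x - y) = lqNorm q (y - x) := by
  simp only [lqNorm, Pi.sub_apply, abs_sub_comm]

theorem lqNorm_add_le (hq : 1 ≤ q) (x y : Fin d → ℝ) :
    lqNorm q (x + y) ≤ lqNorm q x + lqNorm q y :=
  Real.Lp_add_le Finset.univ x y hq

theorem measurableSet_lqBall (c : Fin d → ℝ) (r : ℝ) : MeasurableSet (lqBall d q c r) :=
  measurableSet_le (measurable_lqNorm.comp (measurable_id.sub_const c)) measurable_const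

theorem lqNorm_sub_le_of_mem_lqBall (hq : 1 ≤ q) {c a u : Fin d → ℝ} {r : ℝ}
    (ha : a ∈ lqBall d q c r) (hu : u ∈ lqBall d q c r) : lqNorm q (u - a) ≤ 2 * r :=
  calc lqNorm q (u - a) = lqNorm q ((u - c) + (c - a)) := by rw [sub_add_sub_cancel]
    _ ≤ lqNorm q (u - c) + lqNorm q (a - c) := by
        rw [lqNorm_sub_comm a c]; exact lqNorm_add_le hq _ _
    _ ≤ 2 * r := by linarith [hu.out, ha.out]

end LqNorm

theorem integrable_comp_abs_of_integrableOn_Ioi {g : ℝ → ℝ} (hg : IntegrableOn g (Ioi 0)) :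
    Integrable fun t => g |t| := by
  have hIoi : IntegrableOn (fun t => g |t|) (Ioi 0) :=
    hg.congr_fun (fun t ht => by rw [abs_of_pos ht]) measurableSet_Ioi
  have hIic : IntegrableOn (fun t => g |t|) (Iic 0) := by
    simpa using (Iff.mpr integrableOn_Ici_iff_integrableOn_Ioi hIoi).comp_neg
  simpa using hIic.union hIoi

section Laplace

variable {b q : ℝ}

def laplacePdf (b t : ℝ) : ℝ := 1 / (2 * b) * exp (-|t| / b)

theorem continuous_laplacePdf : Continuous (laplacePdf b) := by
  unfold laplacePdf; fun_prop

theorem laplacePdf_nonneg (hb : 0 ≤ b) (t : ℝ) : 0 ≤ laplacePdf b t := by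
  unfold laplacePdf; positivity

theorem integrable_abs_rpow_mul_laplacePdf (hb : 0 < b) (hq : -1 < q) :
    Integrable fun t => |t| ^ q * laplacePdf b t := by
  have := integrable_comp_abs_of_integrableOn_Ioi
    ((integrableOn_Ioi_rpow_mul_exp_neg_div hb hq).const_mul (1 / (2 * b)))
  refine this.congr (ae_of_all _ fun t => ?_)
  simp only [laplacePdf, neg_div]
  ring

theorem integral_abs_rpow_mul_laplacePdf (hb : 0 < b) (hq : -1 < q) :
    ∫ t, |t| ^ q * laplacePdf b t = b ^ q * Gamma (q + 1) := by
  have heven : ∀ t : ℝ, |t| ^ q * laplacePdf b t =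
      (fun s => 1 / (2 * b) * (s ^ q * exp (-(s / b)))) |t| := fun t => by
    simp only [laplacePdf, neg_div]; ring
  rw [integral_congr_ae (ae_of_all _ heven),
    integral_comp_abs (f := fun s => 1 / (2 * b) * (s ^ q * exp (-(s / b)))), integral_const_mul,
    integral_Ioi_rpow_mul_exp_neg_div hb hq, rpow_add_one hb.ne']
  field_simp

theorem integrable_laplacePdf (hb : 0 < b) : Integrable (laplacePdf b) := by
  simpa using integrable_abs_rpow_mul_laplacePdf hb (q := 0) (by norm_num)

theorem integral_laplacePdf (hb : 0 < b) : ∫ t, laplacePdf b t = 1 := by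
  simpa using integral_abs_rpow_mul_laplacePdf hb (q := 0) (by norm_num)

variable {d : ℕ}

theorem laplacePi_eq_withDensity :
    laplacePi d b = volume.withDensity fun x => ENNReal.ofReal (∏ i, laplacePdf b (x i)) :=
  rfl

theorem lintegral_prod_laplacePi (hb : 0 < b) {g : Fin d → ℝ → ℝ} (hg : ∀ i t, 0 ≤ g i t)
    (hgi : ∀ i, Integrable fun t => g i t * laplacePdf b t) :
    ∫⁻ x, ENNReal.ofReal (∏ i, g i (x i)) ∂laplacePi d b =
      ENNReal.ofReal (∏ i, ∫ t, g i t * laplacePdf b t) := by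
  have hdens : Measurable fun x : Fin d → ℝ => ENNReal.ofReal (∏ i, laplacePdf b (x i)) :=
    (Finset.measurable_prod _ fun i _ =>
      continuous_laplacePdf.measurable.comp (measurable_pi_apply i)).ennreal_ofReal
  have hmul : ∀ x : Fin d → ℝ, ENNReal.ofReal (∏ i, laplacePdf b (x i)) *
      ENNReal.ofReal (∏ i, g i (x i)) = ENNReal.ofReal (∏ i, g i (x i) * laplacePdf b (x i)) := by
    intro x
    rw [← ENNReal.ofReal_mul (Finset.prod_nonneg fun i _ => laplacePdf_nonneg hb.le _),
      ← Finset.prod_mul_distrib]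
    exact congrArg _ (Finset.prod_congr rfl fun i _ => mul_comm _ _)
  rw [laplacePi_eq_withDensity, lintegral_withDensity_eq_lintegral_mul_non_measurable _ hdens
    (ae_of_all _ fun _ => ENNReal.ofReal_lt_top)]
  have hint : Integrable fun x : Fin d → ℝ => ∏ i, g i (x i) * laplacePdf b (x i) :=
    Integrable.fintype_prod hgi
  simp only [Pi.mul_apply, hmul]
  rw [← ofReal_integral_eq_lintegral_ofReal hint
    (ae_of_all _ fun x => Finset.prod_nonneg fun i _ =>
      mul_nonneg (hg i _) (laplacePdf_nonneg hb.le _)),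
    integral_fintype_prod_volume_eq_prod (f := fun i t => g i t * laplacePdf b t)]

theorem isProbabilityMeasure_laplacePi (hb : 0 < b) : IsProbabilityMeasure (laplacePi d b) := by
  constructor
  simpa [integral_laplacePdf hb] using
    lintegral_prod_laplacePi hb (g := fun _ _ => 1) (fun _ _ => zero_le_one)
      (fun _ => by simpa using integrable_laplacePdf hb)

theorem lintegral_abs_rpow_laplacePi (hb : 0 < b) (hq : -1 < q) (i : Fin d) :
    ∫⁻ x, ENNReal.ofReal (|x i| ^ q) ∂laplacePi d b = ENNReal.ofReal (b ^ q * Gamma (q + 1)) := by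
  have hint : ∀ j, ∫ t, (if j = i then |t| ^ q else 1) * laplacePdf b t =
      if j = i then b ^ q * Gamma (q + 1) else 1 := by
    intro j
    split_ifs
    · exact integral_abs_rpow_mul_laplacePdf hb hq
    · simpa using integral_laplacePdf hb
  have h := lintegral_prod_laplacePi hb (g := fun j t => if j = i then |t| ^ q else 1)
    (fun j t => by split_ifs <;> positivity)
    (fun j => by
      split_ifs
      · exact integrable_abs_rpow_mul_laplacePdf hb hq
      · simpa using integrable_laplacePdf hb)
  rw [Finset.prod_congr rfl fun j _ => hint j] at h
  simpa [Finset.prod_ite_eq'] using h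

theorem lintegral_lqNorm_laplacePi_le (hb : 0 < b) (hq : 1 ≤ q) :
    ∫⁻ x, ENNReal.ofReal (lqNorm q x) ∂laplacePi d b ≤
      ENNReal.ofReal ((d : ℝ) ^ (1 / q) * (b * q)) := by
  have hq0 : 0 < q := by linarith
  have := isProbabilityMeasure_laplacePi (d := d) hb
  have hJensen := eLpNorm'_le_eLpNorm'_of_exponent_le one_pos hq (laplacePi d b)
    (measurable_lqNorm (d := d) (q := q)).aestronglyMeasurable
  simp only [eLpNorm', ENNReal.rpow_one, div_one,
    Real.enorm_of_nonneg (lqNorm_nonneg _)] at hJensen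
  have hmoment : ∫⁻ x, ENNReal.ofReal (lqNorm q x) ^ q ∂laplacePi d b =
      d * ENNReal.ofReal (b ^ q * Gamma (q + 1)) := by
    simp_rw [ENNReal.ofReal_rpow_of_nonneg (lqNorm_nonneg _) hq0.le, lqNorm_rpow hq0.ne',
      ENNReal.ofReal_sum_of_nonneg fun i _ => rpow_nonneg (abs_nonneg _) q]
    rw [lintegral_finsetSum _ fun i _ => by fun_prop]
    simp [lintegral_abs_rpow_laplacePi hb (by linarith : -1 < q)]
  calc ∫⁻ x, ENNReal.ofReal (lqNorm q x) ∂laplacePi d b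
      ≤ (∫⁻ x, ENNReal.ofReal (lqNorm q x) ^ q ∂laplacePi d b) ^ (1 / q) := hJensen
    _ ≤ (d * ENNReal.ofReal ((b * q) ^ q)) ^ (1 / q) := by
        rw [hmoment, mul_rpow hb.le hq0.le]
        gcongr
        exact Gamma_add_one_le_rpow_self hq
    _ = ENNReal.ofReal ((d : ℝ) ^ (1 / q) * (b * q)) := by
        rw [← ENNReal.ofReal_natCast, ← ENNReal.ofReal_mul (Nat.cast_nonneg d),
          ENNReal.ofReal_rpow_of_nonneg (by positivity) (by positivity),
          mul_rpow (Nat.cast_nonneg d) (by positivity), ← rpow_mul (by positivity),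
          mul_one_div_cancel hq0.ne', rpow_one]

end Laplace

section Marginal

variable {α β : Type*} [MeasurableSpace α] [MeasurableSpace β] {μ : Measure α} {ν : Measure β}

theorem lintegral_le_of_ae_le [IsZeroOrProbabilityMeasure μ] {f : α → ℝ≥0∞} {c : ℝ≥0∞}
    (h : ∀ᵐ x ∂μ, f x ≤ c) : ∫⁻ x, f x ∂μ ≤ c :=
  (lintegral_mono_ae h).trans <| by
    rw [lintegral_const]; exact mul_le_of_le_one_right' prob_le_one

theorem lintegral_prod_comp_fst_le [IsZeroOrProbabilityMeasure ν] (f : α → ℝ≥0∞) :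
    ∫⁻ p, f p.1 ∂μ.prod ν ≤ ∫⁻ x, f x ∂μ :=
  (lintegral_prod_le _).trans <|
    lintegral_mono fun _ => lintegral_le_of_ae_le (ae_of_all _ fun _ => le_rfl)

theorem lintegral_prod_comp_snd_le [IsZeroOrProbabilityMeasure μ] (f : β → ℝ≥0∞) :
    ∫⁻ p, f p.2 ∂μ.prod ν ≤ ∫⁻ y, f y ∂ν :=
  (lintegral_prod_le _).trans <| lintegral_le_of_ae_le (ae_of_all _ fun _ => le_rfl)

theorem integral_le_of_lintegral_ofReal_le {f : α → ℝ} (hf : 0 ≤ f) {c : ℝ} (hc : 0 ≤ c)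
    (h : ∫⁻ x, ENNReal.ofReal (f x) ∂μ ≤ ENNReal.ofReal c) : ∫ x, f x ∂μ ≤ c :=
  calc ∫ x, f x ∂μ ≤ ‖∫ x, f x ∂μ‖ := Real.le_norm_self _
    _ ≤ (∫⁻ x, ENNReal.ofReal ‖f x‖ ∂μ).toReal := norm_integral_le_lintegral_norm f
    _ = (∫⁻ x, ENNReal.ofReal (f x) ∂μ).toReal := by simp_rw [Real.norm_of_nonneg (hf _)]
    _ ≤ c := ENNReal.toReal_le_of_le_ofReal hc h

end Marginal

theorem lintegral_bern (p : ℝ) (f : Bool → ℝ≥0∞) :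
    ∫⁻ x, f x ∂bern p = ENNReal.ofReal p * f true + ENNReal.ofReal (1 - p) * f false := by
  simp [bern, lintegral_add_measure, lintegral_smul_measure]

theorem isProbabilityMeasure_bern {p : ℝ} (h0 : 0 ≤ p) (h1 : p ≤ 1) :
    IsProbabilityMeasure (bern p) := by
  constructor
  simp [bern, ← ENNReal.ofReal_add h0 (sub_nonneg.2 h1)]

instance {d : ℕ} (Θ : Set (Fin d → ℝ)) : IsZeroOrProbabilityMeasure (unifOn Θ) :=
  inferInstanceAs (IsZeroOrProbabilityMeasure (ProbabilityTheory.cond volume Θ))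

theorem ae_mem_unifOn {d : ℕ} {Θ : Set (Fin d → ℝ)} (hΘ : MeasurableSet Θ) :
    ∀ᵐ u ∂unifOn Θ, u ∈ Θ :=
  ProbabilityTheory.ae_cond_mem hΘ

section Purification

variable {d : ℕ} {q : ℝ}

theorem lintegral_lqNorm_add_sub_le {α : Type*} [MeasurableSpace α] {P : Measure α}
    (hq : 1 ≤ q) {X A Z : α → Fin d → ℝ} (hZ : Measurable Z) :
    ∫⁻ p, ENNReal.ofReal (lqNorm q (X p + Z p - A p)) ∂P ≤
      ∫⁻ p, ENNReal.ofReal (lqNorm q (X p - A p)) ∂P +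
        ∫⁻ p, ENNReal.ofReal (lqNorm q (Z p)) ∂P := by
  have hZ' : Measurable fun p => ENNReal.ofReal (lqNorm q (Z p)) :=
    (measurable_lqNorm.comp hZ).ennreal_ofReal
  rw [← lintegral_add_right _ hZ']
  refine lintegral_mono fun p => ?_
  rw [← ENNReal.ofReal_add (lqNorm_nonneg _) (lqNorm_nonneg _), add_sub_right_comm]
  exact ENNReal.ofReal_le_ofReal (lqNorm_add_le hq _ _)

theorem lintegral_lqNorm_mixture_sub_le {β : Type*} [MeasurableSpace β] (hq : 0 < q)
    {ω R : ℝ} (hω : 0 ≤ ω) {μ ν : Measure (Fin d → ℝ)} [IsZeroOrProbabilityMeasure μ]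
    [IsZeroOrProbabilityMeasure ν] {κ : Measure β} [IsZeroOrProbabilityMeasure κ]
    (hdiam : ∀ᵐ a ∂μ, ∀ᵐ u ∂ν, lqNorm q (u - a) ≤ R) :
    ∫⁻ p, ENNReal.ofReal (lqNorm q ((if p.2.1 then p.1 else p.2.2.1) - p.1))
        ∂μ.prod ((bern (1 - ω)).prod (ν.prod κ)) ≤ ENNReal.ofReal (ω * R) := by
  refine (lintegral_prod_le _).trans (lintegral_le_of_ae_le (hdiam.mono fun a ha => ?_))
  calc _ ≤ ∫⁻ coin, ∫⁻ v, ENNReal.ofReal (lqNorm q ((if coin then a else v.1) - a)) ∂ν.prod κ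
          ∂bern (1 - ω) := lintegral_prod_le _
    _ = ENNReal.ofReal ω * ∫⁻ v, ENNReal.ofReal (lqNorm q (v.1 - a)) ∂ν.prod κ := by
        simp [lintegral_bern, lqNorm_zero hq]
    _ ≤ ENNReal.ofReal ω * ENNReal.ofReal R := by
        gcongr
        exact (lintegral_prod_comp_fst_le _).trans
          (lintegral_le_of_ae_le (ha.mono fun u hu => ENNReal.ofReal_le_ofReal hu))
    _ = ENNReal.ofReal (ω * R) := (ENNReal.ofReal_mul hω).symm

end Purification

/-- **Purification (utility guarantee, Theorem 1 of the paper).**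
On the canonical product probability space carrying an independent quadruple
`(x_apx, coin, u, Z)` with `x_apx ∼ μ` (a probability measure on the ℓq-ball `Θ` of
diameter `R`), `coin` Bernoulli(1-ω), `u ∼ Unif(Θ)`, `Z ∼ Laplace^⊗d(2Δ/ε')`, letting
`x = x_apx` if the coin is heads and `x = u` otherwise and `x_pure = x + Z`, we have
`E‖x_pure - x_apx‖_q ≤ ω R + (4 R d q/ε') (δ/(2ω))^{1/d}`. -/
theorem purification_utility
    (d : ℕ) (hd : 1 ≤ d) (q : ℝ) (hq : 1 ≤ q)
    (ε' δ ω R : ℝ) (hε' : 0 < ε')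
    (hδ : δ ∈ Set.Ioo (0 : ℝ) 1) (hω : ω ∈ Set.Ioo (0 : ℝ) 1) (hR : 0 < R)
    (c : Fin d → ℝ) (Θ : Set (Fin d → ℝ)) (hΘ : Θ = lqBall d q c (R / 2))
    (μ : Measure (Fin d → ℝ)) (hμ : IsProbabilityMeasure μ) (hμsupp : μ Θᶜ = 0)
    (Δ : ℝ) (hΔ : Δ = 2 * (d : ℝ) ^ (1 - 1 / q) * R * (δ / (2 * ω)) ^ (1 / (d : ℝ))) :
    ∫ p : (Fin d → ℝ) × (Bool × ((Fin d → ℝ) × (Fin d → ℝ))),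
        lqNorm q (((if p.2.1 then p.1 else p.2.2.1) + p.2.2.2) - p.1)
      ∂(μ.prod ((bern (1 - ω)).prod ((unifOn Θ).prod (laplacePi d (2 * Δ / ε')))))
      ≤ ω * R + (4 * R * (d : ℝ) * q / ε') * (δ / (2 * ω)) ^ (1 / (d : ℝ)) := by
  obtain ⟨hδ0, -⟩ := hδ
  obtain ⟨hω0, hω1⟩ := hω
  have hd0 : (0 : ℝ) < d := by exact_mod_cast hd
  have hb : 0 < 2 * Δ / ε' := by
    have := rpow_pos_of_pos hd0 (1 - 1 / q)
    rw [hΔ]; positivity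
  have := isProbabilityMeasure_bern (p := 1 - ω) (by linarith) (by linarith)
  have := isProbabilityMeasure_laplacePi (d := d) hb
  have hdiam : ∀ᵐ a ∂μ, ∀ᵐ u ∂unifOn Θ, lqNorm q (u - a) ≤ R := by
    subst hΘ
    filter_upwards [mem_ae_iff.2 hμsupp] with a ha
    filter_upwards [ae_mem_unifOn (measurableSet_lqBall c _)] with u hu
    linarith [lqNorm_sub_le_of_mem_lqBall hq ha hu]
  have hconst : (d : ℝ) ^ (1 / q) * (2 * Δ / ε' * q) =
      4 * R * d * q / ε' * (δ / (2 * ω)) ^ (1 / (d : ℝ)) := by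
    have hdd : (d : ℝ) ^ (1 / q) * d ^ (1 - 1 / q) = d := by
      rw [← rpow_add hd0, add_sub_cancel, rpow_one]
    rw [hΔ]
    linear_combination (4 * R * q * (δ / (2 * ω)) ^ (1 / (d : ℝ)) / ε') * hdd
  refine integral_le_of_lintegral_ofReal_le (fun _ => lqNorm_nonneg _) (by positivity) ?_
  calc _ ≤ _ := lintegral_lqNorm_add_sub_le hq (measurable_snd.comp measurable_snd.snd)
    _ ≤ ENNReal.ofReal (ω * R) + ENNReal.ofReal ((d : ℝ) ^ (1 / q) * (2 * Δ / ε' * q)) :=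
        add_le_add (lintegral_lqNorm_mixture_sub_le (by linarith) hω0.le hdiam)
          (((lintegral_prod_comp_snd_le _).trans ((lintegral_prod_comp_snd_le _).trans
            (lintegral_prod_comp_snd_le _))).trans (lintegral_lqNorm_laplacePi_le hb hq))
    _ = _ := by rw [hconst, ← ENNReal.ofReal_add (by positivity) (by positivity)]

end
end

section
/- Let q ≥ 1, d ≥ 1, and let Θ ⊆ ℝ^d be a convex set with ℓq-diameter at most R that contains a closed ℓq-ball of radius r > 0. Let μ and ν be probability measures supported on Θ, and suppose ν = ν₀ + ν₁ where ν₀ is an arbitrary (nonnegative) measure and ν₁ is absolutely continuous with respect to Lebesgue measure with density at least p_min > 0 everywhere on Θ. Let Δ > 0 and suppose TV(μ, ν) < p_min · vol(B_q^d(1)) · (r/(4R))^d · Δ^d, where vol(B_q^d(1)) is the Lebesgue volume of the unit ℓq-ball in ℝ^d. Then for every subset U of Θ that is open in the subspace topology of Θ, μ(U) ≤ ν(U^Δ), where U^Δ = {x ∈ Θ : inf_{u∈U} ‖x−u‖_q ≤ Δ} is the Δ-expansion of U in ℓq distance (equivalently, by the Givens–Shortt characterization, W_∞^{ℓq}(μ,ν)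 ≤ Δ). -/
open MeasureTheory
open scoped ENNReal

noncomputable section

/-- The total variation distance between two measures. -/
def tvDist {α : Type*} [MeasurableSpace α] (μ ν : Measure α) : ℝ :=
  ⨆ S : {S : Set α // MeasurableSet S}, |(μ S.1).toReal - (ν S.1).toReal|

/-- The `α`-expansion of `U` inside `Θ` in ℓq distance:
`U^α = {x ∈ Θ : inf_{u ∈ U} ‖x - u‖_q ≤ α}`. -/
def expand {d : ℕ} (q : ℝ) (Θ U : Set (Fin d → ℝ)) (α : ℝ) : Set (Fin d → ℝ) :=
  {x ∈ Θ | sInf {t : ℝ | ∃ u ∈ U, t = lqNorm q (x - u)} ≤ α}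

/-!
If every point of `Θ` lies within `Δ` of `U`, then `U^Δ ⊇ Θ` carries all of `ν`. Otherwise, walking
along a segment of the convex set `Θ` from `U` to a point farther than `Δ` from `U`, the distance
to `U` passes through `Δ/2` at some `z`. The homothety of ratio `Δ/(4R)` centred at `z` maps the
inscribed ball into `Θ`; since `2r ≤ R`, its image is an ℓq-ball `B` of radius `rΔ/(4R)` within
`3Δ/8` of `z`, hence `B ⊆ U^Δ \ U`. As `ν(B) ≥ pmin · vol(B) > TV(μ, ν)`,
`μ(U) ≤ μ(V) ≤ ν(V) + TV(μ, ν) = ν(U) + TV(μ, ν) < ν(U ∪ B) ≤ ν(U^Δ)`.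
The geometry is done in the normed space `PiLp p` with `p.toReal = q`, whose norm is `lqNorm q`.
-/

open Metric Set WithLp

section Measure
variable {α : Type*} [MeasurableSpace α] {μ ν : Measure α}

lemma sub_le_tvDist [IsFiniteMeasure μ] [IsFiniteMeasure ν] {S : Set α} (hS : MeasurableSet S) :
    (μ S).toReal - (ν S).toReal ≤ tvDist μ ν := by
  have hbdd : BddAbove (range fun S : {S : Set α // MeasurableSet S} =>
      |(μ S.1).toReal - (ν S.1).toReal|) := by
    refine ⟨μ.real univ + ν.real univ, ?_⟩
    rintro _ ⟨S, rfl⟩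
    exact abs_sub_le_of_nonneg_of_le measureReal_nonneg
      ((measureReal_mono (subset_univ _)).trans (le_add_of_nonneg_right measureReal_nonneg))
      measureReal_nonneg
      ((measureReal_mono (subset_univ _)).trans (le_add_of_nonneg_left measureReal_nonneg))
  exact (le_abs_self _).trans (le_ciSup hbdd ⟨S, hS⟩)

lemma mul_measure_le_withDensity_apply {f : α → ℝ≥0∞} {s : Set α} {c : ℝ≥0∞}
    (hs : MeasurableSet s) (hf : ∀ x ∈ s, c ≤ f x) : c * μ s ≤ μ.withDensity f s := by
  rw [withDensity_apply _ hs, ← setLIntegral_const]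
  exact setLIntegral_mono' hs hf

lemma measure_inter_le_of_tvDist_lt [IsFiniteMeasure μ] [IsFiniteMeasure ν] {V Θ B E : Set α}
    (hV : MeasurableSet V) (hΘ : ν Θᶜ = 0) (hB : MeasurableSet B) (hVB : Disjoint (V ∩ Θ) B)
    (hVE : V ∩ Θ ⊆ E) (hBE : B ⊆ E) (htv : tvDist μ ν < (ν B).toReal) :
    μ (V ∩ Θ) ≤ ν E := by
  have hνV : ν V = ν (V ∩ Θ) := (measure_inter_conull hΘ).symm
  have hνVB : ν (V ∩ Θ) + ν B ≤ ν E := by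
    rw [← measure_union hVB hB]
    exact measure_mono (union_subset hVE hBE)
  rw [← ENNReal.toReal_le_toReal (measure_ne_top _ _) (measure_ne_top _ _)]
  calc (μ (V ∩ Θ)).toReal ≤ (μ V).toReal :=
        ENNReal.toReal_mono (measure_ne_top _ _) (measure_mono inter_subset_left)
    _ ≤ (ν V).toReal + tvDist μ ν := by linarith [sub_le_tvDist (μ := μ) (ν := ν) hV]
    _ ≤ (ν (V ∩ Θ)).toReal + (ν B).toReal := by rw [hνV]; linarith
    _ = (ν (V ∩ Θ) + ν B).toReal :=
        (ENNReal.toReal_add (measure_ne_top _ _) (measure_ne_top _ _)).symm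
    _ ≤ (ν E).toReal := ENNReal.toReal_mono (measure_ne_top _ _) hνVB

end Measure

section Geometry

variable {E : Type*} [NormedAddCommGroup E] [NormedSpace ℝ E]

lemma Convex.closedBall_add_smul_sub_subset {Θ : Set E} (hΘ : Convex ℝ Θ) {c z : E} {r s : ℝ}
    (hc : closedBall c r ⊆ Θ) (hz : z ∈ Θ) (hs₀ : 0 < s) (hs₁ : s ≤ 1) :
    closedBall (z + s • (c - z)) (s * r) ⊆ Θ := by
  intro y hy
  have hw : c + s⁻¹ • (y - (z + s • (c - z))) ∈ closedBall c r := by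
    rw [mem_closedBall, dist_eq_norm, add_sub_cancel_left, norm_smul, Real.norm_eq_abs,
      abs_of_pos (inv_pos.2 hs₀), ← dist_eq_norm, inv_mul_le_iff₀ hs₀]
    exact hy
  convert hΘ hz (hc hw) (sub_nonneg.2 hs₁) hs₀.le (sub_add_cancel 1 s) using 1
  rw [smul_add, smul_inv_smul₀ hs₀.ne']
  module

lemma two_mul_le_of_closedBall_subset [Nontrivial E] {Θ : Set E} {c : E} {r R : ℝ} (hr : 0 ≤ r)
    (hc : closedBall c r ⊆ Θ) (hdiam : ∀ x ∈ Θ, ∀ y ∈ Θ, dist x y ≤ R) : 2 * r ≤ R := by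
  have hcΘ : c ∈ Θ := hc (mem_closedBall_self hr)
  rw [← diam_closedBall_eq c hr]
  exact diam_le_of_forall_dist_le (dist_nonneg.trans (hdiam c hcΘ c hcΘ))
    fun x hx y hy => hdiam x (hc hx) y (hc hy)

lemma exists_mem_segment_infDist_eq {U : Set E} {u x : E} (hu : u ∈ U) {a : ℝ} (ha₀ : 0 ≤ a)
    (ha : a ≤ infDist x U) : ∃ z ∈ segment ℝ u x, infDist z U = a :=
  (convex_segment u x).isPreconnected.intermediate_value (left_mem_segment ℝ u x)
    (right_mem_segment ℝ u x) (continuous_infDist_pt U).continuousOn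
    ⟨by rwa [infDist_zero_of_mem hu], ha⟩

theorem Convex.exists_closedBall_subset_diff [Nontrivial E] {Θ U : Set E} {c x : E} {r R Δ : ℝ}
    (hΘ : Convex ℝ Θ) (hdiam : ∀ x ∈ Θ, ∀ y ∈ Θ, dist x y ≤ R) (hr : 0 ≤ r)
    (hc : closedBall c r ⊆ Θ) (hUΘ : U ⊆ Θ) (hxΘ : x ∈ Θ) (hΔ : 0 < Δ) (hxU : Δ < infDist x U) :
    ∃ m, closedBall m (r / (4 * R) * Δ) ⊆ (Θ ∩ {y | infDist y U ≤ Δ}) \ U := by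
  obtain ⟨u, hu⟩ : U.Nonempty := by
    by_contra hU
    rw [not_nonempty_iff_eq_empty.1 hU, infDist_empty] at hxU
    linarith
  have hΔR : Δ < R := hxU.trans_le ((infDist_le_dist_of_mem hu).trans (hdiam x hxΘ u (hUΘ hu)))
  have hrR := two_mul_le_of_closedBall_subset hr hc hdiam
  obtain ⟨z, hz_seg, hz⟩ := exists_mem_segment_infDist_eq hu (half_pos hΔ).le
    ((half_le_self hΔ.le).trans hxU.le)
  have hzΘ : z ∈ Θ := hΘ.segment_subset (hUΘ hu) hxΘ hz_seg
  have hR : 0 < R := hΔ.trans hΔR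
  set s := Δ / (4 * R)
  have hs₀ : 0 < s := by positivity
  have hs₁ : s ≤ 1 := by rw [div_le_one (by positivity)]; linarith
  have hsR : s * R = Δ / 4 := by rw [div_mul_eq_mul_div, mul_div_mul_right _ _ hR.ne']
  refine ⟨z + s • (c - z), fun y hy => ?_⟩
  rw [show r / (4 * R) * Δ = s * r by ring] at hy
  have hyz : dist y z ≤ 3 / 8 * Δ := by
    have hcz := hdiam c (hc (mem_closedBall_self hr)) z hzΘ
    have hmz : dist (z + s • (c - z)) z = s * dist c z := by
      rw [dist_eq_norm, add_sub_cancel_left, norm_smul, Real.norm_eq_abs, abs_of_pos hs₀,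
        dist_eq_norm]
    calc dist y z ≤ dist y (z + s • (c - z)) + dist (z + s • (c - z)) z := dist_triangle _ _ _
      _ ≤ s * r + s * R := by
        rw [hmz]
        gcongr
        exact hy
      _ ≤ 3 / 8 * Δ := by nlinarith
  refine ⟨⟨hΘ.closedBall_add_smul_sub_subset hc hzΘ hs₀ hs₁ hy, ?_⟩, fun hyU => ?_⟩
  · show infDist y U ≤ Δ
    linarith [infDist_le_infDist_add_dist (x := y) (y := z) (s := U)]
  · linarith [infDist_le_dist_of_mem (x := z) hyU, dist_comm y z]

end Geometry

section LqNorm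
variable {d : ℕ} {p : ℝ≥0∞}

lemma volume_preimage_toLp {S : Set (PiLp p fun _ : Fin d => ℝ)} (hS : MeasurableSet S) :
    volume (toLp p ⁻¹' S) =
      volume.map (PiLp.continuousLinearEquiv p ℝ fun _ : Fin d => ℝ).symm S :=
  (Measure.map_apply (PiLp.continuous_toLp p _).measurable hS).symm

variable [Fact (1 ≤ p)]

lemma lqNorm_toReal_eq_norm (hp : p ≠ ⊤) (x : Fin d → ℝ) : lqNorm p.toReal x = ‖toLp p x‖ := by
  rw [PiLp.norm_eq_sum (ENNReal.toReal_pos (one_pos.trans_le Fact.out).ne' hp)]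
  simp [lqNorm, Real.norm_eq_abs]

lemma lqNorm_toReal_sub_eq_dist (hp : p ≠ ⊤) (x y : Fin d → ℝ) :
    lqNorm p.toReal (x - y) = dist (toLp p x) (toLp p y) := by
  rw [lqNorm_toReal_eq_norm hp, dist_eq_norm, toLp_sub]

lemma lqBall_toReal_eq_preimage (hp : p ≠ ⊤) (c : Fin d → ℝ) (ρ : ℝ) :
    lqBall d p.toReal c ρ = toLp p ⁻¹' closedBall (toLp p c) ρ := by
  ext x
  rw [lqBall, mem_ofPred_eq, lqNorm_toReal_sub_eq_dist hp, mem_preimage, mem_closedBall]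

lemma measurableSet_lqBall_s3 (hp : p ≠ ⊤) (c : Fin d → ℝ) (ρ : ℝ) :
    MeasurableSet (lqBall d p.toReal c ρ) := by
  rw [lqBall_toReal_eq_preimage hp]
  exact (isClosed_closedBall.preimage (PiLp.continuous_toLp _ _)).measurableSet

lemma volume_lqBall (hp : p ≠ ⊤) (c : Fin d → ℝ) {ρ : ℝ} (hρ : 0 ≤ ρ) :
    volume (lqBall d p.toReal c ρ) = ENNReal.ofReal (ρ ^ d) * volume (lqBall d p.toReal 0 1) := by
  simp only [lqBall_toReal_eq_preimage hp, volume_preimage_toLp measurableSet_closedBall,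
    Measure.addHaar_closedBall' _ _ hρ, toLp_zero,
    (PiLp.continuousLinearEquiv p ℝ fun _ : Fin d => ℝ).toLinearEquiv.finrank_eq,
    Module.finrank_fin_fun]

lemma expand_toReal_eq (hp : p ≠ ⊤) (Θ U : Set (Fin d → ℝ)) (α : ℝ) :
    expand p.toReal Θ U α = Θ ∩ toLp p ⁻¹' {y | infDist y (ofLp ⁻¹' U) ≤ α} := by
  ext x
  simp only [expand, mem_ofPred_eq, mem_inter_iff, mem_preimage, and_congr_right_iff]
  intro _
  rw [infDist_eq_iInf, ← sInf_range]
  congr! 3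
  ext t
  simp only [lqNorm_toReal_sub_eq_dist hp, mem_ofPred_eq, mem_range, Subtype.exists, mem_preimage,
    exists_prop, eq_comm (a := t)]
  constructor
  · rintro ⟨u, hu, rfl⟩
    exact ⟨toLp p u, hu, rfl⟩
  · rintro ⟨y, hy, rfl⟩
    exact ⟨ofLp y, hy, by rw [toLp_ofLp]⟩

lemma subset_expand (hp : p ≠ ⊤) {Θ U : Set (Fin d → ℝ)} {α : ℝ} (hUΘ : U ⊆ Θ) (hα : 0 ≤ α) :
    U ⊆ expand p.toReal Θ U α := by
  rw [expand_toReal_eq hp]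
  exact fun u hu =>
    ⟨hUΘ hu, (infDist_zero_of_mem (show toLp p u ∈ ofLp ⁻¹' U from hu)).trans_le hα⟩

theorem exists_lqBall_subset_expand_diff [NeZero d] (hp : p ≠ ⊤) {Θ U : Set (Fin d → ℝ)}
    {c x : Fin d → ℝ} {r R Δ : ℝ} (hΘ : Convex ℝ Θ)
    (hdiam : ∀ x ∈ Θ, ∀ y ∈ Θ, lqNorm p.toReal (x - y) ≤ R) (hr : 0 ≤ r)
    (hc : lqBall d p.toReal c r ⊆ Θ) (hUΘ : U ⊆ Θ) (hxΘ : x ∈ Θ)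
    (hxU : x ∉ expand p.toReal Θ U Δ) (hΔ : 0 < Δ) :
    ∃ m, lqBall d p.toReal m (r / (4 * R) * Δ) ⊆ expand p.toReal Θ U Δ \ U := by
  rw [expand_toReal_eq hp] at hxU ⊢
  rw [lqBall_toReal_eq_preimage hp] at hc
  obtain ⟨m, hm⟩ := (hΘ.linear_preimage (WithLp.linearEquiv p ℝ (Fin d → ℝ)).toLinearMap)
    |>.exists_closedBall_subset_diff (U := ofLp ⁻¹' U)
    (fun x hx y hy => by simpa [lqNorm_toReal_sub_eq_dist hp] using hdiam _ hx _ hy) hr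
    (fun y hy => hc (by rwa [mem_preimage, toLp_ofLp])) (preimage_mono hUΘ) hxΘ hΔ
    (by simpa [hxΘ] using hxU)
  refine ⟨ofLp m, ?_⟩
  rw [lqBall_toReal_eq_preimage hp, toLp_ofLp]
  exact preimage_mono hm

end LqNorm

theorem tv_to_winfty_convex_general
    (d : ℕ) (hd : 1 ≤ d) (q : ℝ) (hq : 1 ≤ q)
    (R r : ℝ) (hr : 0 < r)
    (Θ : Set (Fin d → ℝ)) (hconv : Convex ℝ Θ)
    (hdiam : ∀ x ∈ Θ, ∀ y ∈ Θ, lqNorm q (x - y) ≤ R)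
    (hball : ∃ c, lqBall d q c r ⊆ Θ)
    (μ ν ν₀ : Measure (Fin d → ℝ)) (f : (Fin d → ℝ) → ℝ) (pmin : ℝ) (hpmin : 0 < pmin)
    (hμ : IsProbabilityMeasure μ) (hν : IsProbabilityMeasure ν)
    (hνsupp : ν Θᶜ = 0)
    (hνdecomp : ν = ν₀ + volume.withDensity fun x => ENNReal.ofReal (f x))
    (hf : ∀ x ∈ Θ, pmin ≤ f x)
    (Δ : ℝ) (hΔ : 0 < Δ)
    (hTV : tvDist μ ν <
      pmin * (volume (lqBall d q 0 1)).toReal * (r / (4 * R)) ^ d * Δ ^ d) :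
    ∀ U : Set (Fin d → ℝ), (∃ V, IsOpen V ∧ U = V ∩ Θ) →
      μ U ≤ ν (expand q Θ U Δ) := by
  rintro U ⟨V, hV, rfl⟩
  obtain ⟨p, hp, hp_top, rfl⟩ : ∃ p : ℝ≥0∞, 1 ≤ p ∧ p ≠ ⊤ ∧ p.toReal = q :=
    ⟨ENNReal.ofReal q, ENNReal.one_le_ofReal.2 hq, ENNReal.ofReal_ne_top,
      ENNReal.toReal_ofReal (zero_le_one.trans hq)⟩
  have : Fact (1 ≤ p) := ⟨hp⟩
  have : NeZero d := ⟨by omega⟩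
  by_cases hcov : Θ ⊆ expand p.toReal Θ (V ∩ Θ) Δ
  · calc μ (V ∩ Θ) ≤ ν (univ ∩ Θ) := by
          rw [measure_inter_conull hνsupp, measure_univ]
          exact prob_le_one
      _ ≤ _ := measure_mono (inter_subset_right.trans hcov)
  obtain ⟨x, hxΘ, hxE⟩ := not_subset.1 hcov
  obtain ⟨c, hc⟩ := hball
  have hR : 0 ≤ R := by
    simpa only [lqNorm_toReal_sub_eq_dist hp_top, dist_self] using hdiam x hxΘ x hxΘ
  obtain ⟨m, hm⟩ := exists_lqBall_subset_expand_diff hp_top hconv hdiam hr.le hc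
    inter_subset_right hxΘ hxE hΔ
  have hB := measurableSet_lqBall_s3 hp_top m (r / (4 * R) * Δ)
  refine measure_inter_le_of_tvDist_lt hV.measurableSet hνsupp hB
    (disjoint_sdiff_right.mono_right hm) (subset_expand hp_top inter_subset_right hΔ.le)
    (hm.trans sdiff_subset) (hTV.trans_le ?_)
  calc pmin * (volume (lqBall d p.toReal 0 1)).toReal * (r / (4 * R)) ^ d * Δ ^ d
      = (ENNReal.ofReal pmin * volume (lqBall d p.toReal m (r / (4 * R) * Δ))).toReal := by
        rw [volume_lqBall hp_top m (by positivity), ENNReal.toReal_mul, ENNReal.toReal_mul,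
          ENNReal.toReal_ofReal hpmin.le, ENNReal.toReal_ofReal (by positivity), mul_pow]
        ring
    _ ≤ (ν (lqBall d p.toReal m (r / (4 * R) * Δ))).toReal := by
        refine ENNReal.toReal_mono (measure_ne_top _ _) ?_
        rw [hνdecomp, Measure.add_apply]
        exact (mul_measure_le_withDensity_apply hB fun y hy =>
          ENNReal.ofReal_le_ofReal (hf y (hm hy).1.1)).trans le_add_self

/-- **Lemma 1 of the paper (converting TV to W∞), general convex domain.**
Let `Θ ⊆ ℝ^d` be convex with ℓq-diameter at most `R`, containing an ℓq-ball of radius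
`r > 0`.  Let `μ, ν` be probability measures on `Θ` with `ν = ν₀ + ν₁`, `ν₁` having
Lebesgue density at least `p_min` on `Θ`.  If
`TV(μ,ν) < p_min · vol(B_q^d(1)) · (r/(4R))^d · Δ^d`, then `μ(U) ≤ ν(U^Δ)` for every
relatively open `U ⊆ Θ` (i.e. `W_∞^{ℓq}(μ,ν) ≤ Δ`). -/
theorem tv_to_winfty_convex
    (d : ℕ) (hd : 1 ≤ d) (q : ℝ) (hq : 1 ≤ q)
    (R r : ℝ) (hr : 0 < r)
    (Θ : Set (Fin d → ℝ)) (hconv : Convex ℝ Θ)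
    (hdiam : ∀ x ∈ Θ, ∀ y ∈ Θ, lqNorm q (x - y) ≤ R)
    (hball : ∃ c, lqBall d q c r ⊆ Θ)
    (μ ν ν₀ : Measure (Fin d → ℝ)) (f : (Fin d → ℝ) → ℝ) (pmin : ℝ) (hpmin : 0 < pmin)
    (hμ : IsProbabilityMeasure μ) (hν : IsProbabilityMeasure ν)
    (hμsupp : μ Θᶜ = 0) (hνsupp : ν Θᶜ = 0)
    (hνdecomp : ν = ν₀ + volume.withDensity fun x => ENNReal.ofReal (f x))
    (hf : ∀ x ∈ Θ, pmin ≤ f x)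
    (Δ : ℝ) (hΔ : 0 < Δ)
    (hTV : tvDist μ ν <
      pmin * (volume (lqBall d q 0 1)).toReal * (r / (4 * R)) ^ d * Δ ^ d) :
    ∀ U : Set (Fin d → ℝ), (∃ V, IsOpen V ∧ U = V ∩ Θ) →
      μ U ≤ ν (expand q Θ U Δ) :=
  tv_to_winfty_convex_general d hd q hq R r hr Θ hconv hdiam hball μ ν ν₀ f pmin hpmin hμ hν hνsupp
    hνdecomp hf Δ hΔ hTV

end
end

section
/- Let d ≥ 1 and 0 < b ≤ 1/(2d). Let z ∈ {0,1}^d be a fixed binary vector and let N₁,…,N_d be independent Laplace(b) random variables. Then the probability that the coordinatewise rounding of z + N recovers z exactly, i.e., P[ for every i ∈ {1,…,d}, the indicator 1{z_i + N_i ≥ 1/2} equals z_i ], is at least 1 − (d/2)·e^{−d}. -/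
open MeasureTheory
open scoped ENNReal

noncomputable section

/-!
The product density identifies `laplacePi d b` with the product of `d` copies of the
one-dimensional Laplace law, so coordinate `i` is rounded wrongly with probability
`P(N ≥ 1/2) = P(N < -1/2) = e^{-1/(2b)}/2 ≤ e^{-d}/2`, as `1/(2b) ≥ d`. The union bound over the `d`
coordinates then gives the claim.
-/

open Set Real

theorem MeasureTheory.lintegral_fin_nat_prod_eq_prod {n : ℕ} {E : Type*} [MeasurableSpace E]
    (μ : Fin n → Measure E) [∀ i, SigmaFinite (μ i)]
    {f : Fin n → E → ℝ≥0∞} (hf : ∀ i, Measurable (f i)) :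
    ∫⁻ x, ∏ i, f i (x i) ∂Measure.pi μ = ∏ i, ∫⁻ t, f i t ∂μ i := by
  induction n with
  | zero => simp
  | succ n ih =>
    calc
      _ = ∫⁻ x : E × (Fin n → E), f 0 x.1 * ∏ i : Fin n, f i.succ (x.2 i)
            ∂(μ 0).prod (Measure.pi fun i => μ i.succ) := by
        rw [← ((measurePreserving_piFinSuccAbove μ 0).symm).lintegral_comp_emb
          (MeasurableEquiv.measurableEmbedding _)]
        simp_rw [MeasurableEquiv.piFinSuccAbove_symm_apply, Fin.insertNthEquiv,
          Fin.prod_univ_succ, Fin.insertNth_zero, Equiv.coe_fn_mk, Fin.cons_succ,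
          Fin.zero_succAbove, cast_eq, Fin.cons_zero]
      _ = (∫⁻ t, f 0 t ∂μ 0) * ∏ i : Fin n, ∫⁻ t, f i.succ t ∂μ i.succ := by
        rw [lintegral_prod_mul (g := fun y : Fin n → E => ∏ i, f i.succ (y i))
          (hf 0).aemeasurable
          (Finset.measurable_prod _ fun i _ => (hf i.succ).comp (measurable_pi_apply i)).aemeasurable,
          ih _ fun i => hf i.succ]
      _ = _ := (Fin.prod_univ_succ fun i => ∫⁻ t, f i t ∂μ i).symm

theorem MeasureTheory.Measure.pi_withDensity {n : ℕ} {E : Type*} [MeasurableSpace E]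
    (μ : Fin n → Measure E) [∀ i, SigmaFinite (μ i)]
    {f : Fin n → E → ℝ≥0∞} (hf : ∀ i, Measurable (f i))
    [∀ i, SigmaFinite ((μ i).withDensity (f i))] :
    Measure.pi (fun i => (μ i).withDensity (f i))
      = (Measure.pi μ).withDensity fun x => ∏ i, f i (x i) := by
  refine Measure.pi_eq fun s hs => ?_
  have hbox : (univ.pi s).indicator (fun x => ∏ i, f i (x i))
      = fun x => ∏ i, (s i).indicator (f i) (x i) := by
    ext x
    by_cases hx : x ∈ univ.pi s
    · rw [indicator_of_mem hx]
      exact Finset.prod_congr rfl fun i _ => (indicator_of_mem (hx i trivial) _).symm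
    · obtain ⟨i, -, hi⟩ := not_forall₂.mp hx
      rw [indicator_of_notMem hx,
        Finset.prod_eq_zero (Finset.mem_univ i) (indicator_of_notMem hi _)]
  rw [withDensity_apply _ (MeasurableSet.univ_pi hs),
    ← lintegral_indicator (MeasurableSet.univ_pi hs), hbox,
    lintegral_fin_nat_prod_eq_prod μ fun i => (hf i).indicator (hs i)]
  exact Finset.prod_congr rfl fun i _ => by
    rw [withDensity_apply _ (hs i), lintegral_indicator (hs i)]

theorem MeasureTheory.one_sub_sum_measure_compl_le_measure_iInter {α ι : Type*}
    [MeasurableSpace α] [Fintype ι] (μ : Measure α) [IsProbabilityMeasure μ] (s : ι → Set α) :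
    1 - ∑ i, μ (s i)ᶜ ≤ μ (⋂ i, s i) := by
  refine tsub_le_iff_right.2 ?_
  calc 1 = μ univ := measure_univ.symm
    _ ≤ μ (⋂ i, s i) + μ (⋂ i, s i)ᶜ := by
      rw [← union_compl_self (⋂ i, s i)]
      exact measure_union_le _ _
    _ ≤ μ (⋂ i, s i) + ∑ i, μ (s i)ᶜ := by
      rw [compl_iInter]
      gcongr
      exact measure_iUnion_fintype_le μ _

def roundHalf (x : ℝ) : ℝ := if 1 / 2 ≤ x then 1 else 0

lemma measurable_roundHalf : Measurable roundHalf :=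
  Measurable.ite measurableSet_Ici measurable_const measurable_const

lemma measurableSet_roundHalf_add_ne (z : ℝ) : MeasurableSet {t | roundHalf (z + t) ≠ z} :=
  (measurable_roundHalf.comp (measurable_const_add z)) (measurableSet_singleton z).compl

def laplacePDFReal (b t : ℝ) : ℝ := 1 / (2 * b) * exp (-|t| / b)

def laplacePDF (b t : ℝ) : ℝ≥0∞ := ENNReal.ofReal (laplacePDFReal b t)

def laplaceReal (b : ℝ) : Measure ℝ := volume.withDensity (laplacePDF b)

section Laplace

variable {b : ℝ}

lemma laplacePDFReal_nonneg (hb : 0 < b) (t : ℝ) : 0 ≤ laplacePDFReal b t := by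
  unfold laplacePDFReal; positivity

lemma measurable_laplacePDF (b : ℝ) : Measurable (laplacePDF b) := by
  unfold laplacePDF laplacePDFReal; fun_prop

lemma laplacePDFReal_of_nonneg {t : ℝ} (ht : 0 ≤ t) :
    laplacePDFReal b t = 1 / (2 * b) * exp (-b⁻¹ * t) := by
  rw [laplacePDFReal, abs_of_nonneg ht]
  congr 2
  ring

lemma laplacePDFReal_of_nonpos {t : ℝ} (ht : t ≤ 0) :
    laplacePDFReal b t = 1 / (2 * b) * exp (b⁻¹ * t) := by
  rw [laplacePDFReal, abs_of_nonpos ht, neg_neg]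
  congr 2
  ring

instance : NullSingletonClass (laplaceReal b) :=
  ⟨fun x => withDensity_absolutelyContinuous _ _ (measure_singleton x)⟩

lemma laplaceReal_Ioi (hb : 0 < b) {c : ℝ} (hc : 0 ≤ c) :
    laplaceReal b (Ioi c) = ENNReal.ofReal (exp (-c / b) / 2) := by
  have hpdf : EqOn (laplacePDFReal b) (fun t => 1 / (2 * b) * exp (-b⁻¹ * t)) (Ioi c) :=
    fun t ht => laplacePDFReal_of_nonneg (hc.trans ht.le)
  have hint : IntegrableOn (laplacePDFReal b) (Ioi c) :=
    IntegrableOn.congr_fun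
      ((integrableOn_exp_mul_Ioi (neg_lt_zero.2 (inv_pos.2 hb)) c).const_mul _)
      hpdf.symm measurableSet_Ioi
  simp_rw [laplaceReal, withDensity_apply _ measurableSet_Ioi, laplacePDF]
  rw [← ofReal_integral_eq_lintegral_ofReal hint (ae_of_all _ (laplacePDFReal_nonneg hb)),
    setIntegral_congr_fun measurableSet_Ioi hpdf, integral_const_mul,
    integral_exp_mul_Ioi (neg_lt_zero.2 (inv_pos.2 hb))]
  congr 1
  field_simp

lemma laplaceReal_Iic (hb : 0 < b) {c : ℝ} (hc : c ≤ 0) :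
    laplaceReal b (Iic c) = ENNReal.ofReal (exp (c / b) / 2) := by
  have hpdf : EqOn (laplacePDFReal b) (fun t => 1 / (2 * b) * exp (b⁻¹ * t)) (Iic c) :=
    fun t ht => laplacePDFReal_of_nonpos (ht.trans hc)
  have hint : IntegrableOn (laplacePDFReal b) (Iic c) :=
    IntegrableOn.congr_fun ((integrableOn_exp_mul_Iic (inv_pos.2 hb) c).const_mul _)
      hpdf.symm measurableSet_Iic
  simp_rw [laplaceReal, withDensity_apply _ measurableSet_Iic, laplacePDF]
  rw [← ofReal_integral_eq_lintegral_ofReal hint (ae_of_all _ (laplacePDFReal_nonneg hb)),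
    setIntegral_congr_fun measurableSet_Iic hpdf, integral_const_mul,
    integral_exp_mul_Iic (inv_pos.2 hb)]
  congr 1
  field_simp

lemma isProbabilityMeasure_laplaceReal (hb : 0 < b) : IsProbabilityMeasure (laplaceReal b) := by
  constructor
  rw [← Iic_union_Ioi (a := 0), measure_union (Iic_disjoint_Ioi le_rfl) measurableSet_Ioi,
    laplaceReal_Iic hb le_rfl, laplaceReal_Ioi hb le_rfl,
    ← ENNReal.ofReal_add (by positivity) (by positivity)]
  norm_num

lemma laplacePi_eq_pi (d : ℕ) (hb : 0 < b) :
    laplacePi d b = Measure.pi fun _ => laplaceReal b := by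
  have : IsProbabilityMeasure (volume.withDensity (laplacePDF b)) :=
    isProbabilityMeasure_laplaceReal hb
  rw [laplaceReal, Measure.pi_withDensity _ fun _ => measurable_laplacePDF b, ← volume_pi,
    laplacePi]
  congr with x
  exact ENNReal.ofReal_prod_of_nonneg fun i _ => laplacePDFReal_nonneg hb (x i)

lemma laplaceReal_roundHalf_add_ne (hb : 0 < b) {z : ℝ} (hz : z = 0 ∨ z = 1) :
    laplaceReal b {t | roundHalf (z + t) ≠ z} = ENNReal.ofReal (exp (-(1 / 2) / b) / 2) := by
  rcases hz with rfl | rfl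
  · have : {t | roundHalf (0 + t) ≠ 0} = Ici (1 / 2) := by
      ext t
      simp only [roundHalf, one_div, zero_add, ne_eq, ite_eq_right_iff, one_ne_zero, imp_false,
        not_le, not_lt, mem_ofPred_eq, mem_Ici]
    rw [this, ← measure_congr Ioi_ae_eq_Ici, laplaceReal_Ioi hb (by norm_num)]
  · have : {t | roundHalf (1 + t) ≠ 1} = Iio (-(1 / 2)) := by
      ext t
      simp only [roundHalf, one_div, ne_eq, ite_eq_left_iff, not_le, zero_ne_one, imp_false,
        not_lt, mem_ofPred_eq, mem_Iio]
      constructor <;> intro <;> linarith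
    rw [this, measure_congr Iio_ae_eq_Iic, laplaceReal_Iic hb (by norm_num)]

lemma mul_laplace_tail_le {d : ℕ} (hb : 0 < b) (hb2 : b ≤ 1 / (2 * (d : ℝ))) :
    (d : ℝ) * (exp (-(1 / 2) / b) / 2) ≤ d / 2 * exp (-d) := by
  have hdb : (d : ℝ) ≤ 1 / 2 / b := by
    rcases (Nat.cast_nonneg d : (0 : ℝ) ≤ d).eq_or_lt with hd | hd
    · rw [← hd]; positivity
    · rw [le_div_iff₀ (by positivity)] at hb2
      rw [le_div_iff₀ hb]
      linarith
  calc (d : ℝ) * (exp (-(1 / 2) / b) / 2) = d / 2 * exp (-(1 / 2) / b) := by ring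
    _ ≤ d / 2 * exp (-d) := by
      gcongr
      rw [neg_div]
      exact neg_le_neg hdb

end Laplace

theorem binary_rounding_recovery_general
    (d : ℕ) (b : ℝ) (hb : 0 < b) (hb2 : b ≤ 1 / (2 * (d : ℝ)))
    (z : Fin d → ℝ) (hz : ∀ i, z i = 0 ∨ z i = 1) :
    ENNReal.ofReal (1 - (d : ℝ) / 2 * Real.exp (-(d : ℝ)))
      ≤ laplacePi d b
          {n | ∀ i, (if (1 : ℝ) / 2 ≤ z i + n i then (1 : ℝ) else 0) = z i} := by
  have := isProbabilityMeasure_laplaceReal hb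
  set μ : Measure (Fin d → ℝ) := Measure.pi fun _ => laplaceReal b
  have hfail (i : Fin d) : μ {n | roundHalf (z i + n i) = z i}ᶜ
      = ENNReal.ofReal (exp (-(1 / 2) / b) / 2) := by
    rw [← laplaceReal_roundHalf_add_ne hb (hz i)]
    exact (measurePreserving_eval (fun _ => laplaceReal b) i).measure_preimage
      (measurableSet_roundHalf_add_ne (z i)).nullMeasurableSet
  have hsum : (d : ℝ≥0∞) * ENNReal.ofReal (exp (-(1 / 2) / b) / 2)
      ≤ ENNReal.ofReal (d / 2 * exp (-d)) := by
    rw [← ENNReal.ofReal_natCast, ← ENNReal.ofReal_mul (Nat.cast_nonneg d)]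
    exact ENNReal.ofReal_le_ofReal (mul_laplace_tail_le hb hb2)
  calc ENNReal.ofReal (1 - d / 2 * exp (-d))
      = 1 - ENNReal.ofReal (d / 2 * exp (-d)) := by
        rw [ENNReal.ofReal_sub _ (by positivity), ENNReal.ofReal_one]
    _ ≤ 1 - ∑ i, μ {n | roundHalf (z i + n i) = z i}ᶜ := by
        simpa [hfail] using tsub_le_tsub_left hsum 1
    _ ≤ μ (⋂ i, {n | roundHalf (z i + n i) = z i}) :=
        one_sub_sum_measure_compl_le_measure_iInter μ _
    _ = _ := by rw [laplacePi_eq_pi d hb, ← ofPred_forall]; rfl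

/-- **Binary rounding recovery (utility core of Theorem 2 of the paper).**
For a fixed binary vector `z ∈ {0,1}^d` and independent `Laplace(b)` noise coordinates
with `0 < b ≤ 1/(2d)`, the coordinatewise rounding of `z + N` at threshold `1/2`
recovers `z` exactly with probability at least `1 - (d/2) e^{-d}`. -/
theorem binary_rounding_recovery
    (d : ℕ) (hd : 1 ≤ d) (b : ℝ) (hb : 0 < b) (hb2 : b ≤ 1 / (2 * (d : ℝ)))
    (z : Fin d → ℝ) (hz : ∀ i, z i = 0 ∨ z i = 1) :
    ENNReal.ofReal (1 - (d : ℝ) / 2 * Real.exp (-(d : ℝ)))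
      ≤ laplacePi d b
          {n | ∀ i, (if (1 : ℝ) / 2 ≤ z i + n i then (1 : ℝ) else 0) = z i} :=
  binary_rounding_recovery_general d b hb hb2 z hz

end
end

section
/- Let x ∈ ℝ^d be an s-sparse vector (at most s nonzero coordinates) and let x' ∈ ℝ^d satisfy ‖x'‖₁ ≤ ‖x‖₁. Then the difference v = x' − x is 4s-numerically sparse, i.e., ‖v‖₁² ≤ 4s·‖v‖₂². -/
/-- **Difference of numerically sparse vectors (Lemma 14 of the paper).**
If `x ∈ ℝ^d` is `s`-sparse and `‖x'‖₁ ≤ ‖x‖₁`, then `v = x' - x` is `4s`-numerically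
sparse: `‖v‖₁² ≤ 4s·‖v‖₂²`. -/
theorem numerically_sparse_difference
    (d s : ℕ) (x x' : Fin d → ℝ)
    (hs : (Finset.univ.filter fun i => x i ≠ 0).card ≤ s)
    (h1 : ∑ i, |x' i| ≤ ∑ i, |x i|) :
    (∑ i, |x' i - x i|) ^ 2 ≤ 4 * (s : ℝ) * ∑ i, (x' i - x i) ^ 2 := by
  set S := Finset.univ.filter fun i => x i ≠ 0 with hS
  have hxc : ∀ i ∈ Sᶜ, x i = 0 := by
    intro i hi
    simpa [hS, Finset.mem_compl, Finset.mem_filter] using hi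
  -- split sums over S and Sᶜ
  have hsplit : ∀ f : Fin d → ℝ, ∑ i, f i = ∑ i ∈ S, f i + ∑ i ∈ Sᶜ, f i := by
    intro f
    rw [← Finset.sum_add_sum_compl S f]
  -- off-support part bounded by on-support part
  have key : ∑ i ∈ Sᶜ, |x' i - x i| ≤ ∑ i ∈ S, |x' i - x i| := by
    have h1' : ∑ i ∈ S, |x' i| + ∑ i ∈ Sᶜ, |x' i| ≤ ∑ i ∈ S, |x i| := by
      have := h1
      rw [hsplit (fun i => |x' i|), hsplit (fun i => |x i|)] at this
      have h0 : ∑ i ∈ Sᶜ, |x i| = 0 := by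
        apply Finset.sum_eq_zero
        intro i hi
        simp [hxc i hi]
      linarith
    have h2 : ∑ i ∈ S, |x i| - ∑ i ∈ S, |x' i| ≤ ∑ i ∈ S, |x' i - x i| := by
      rw [← Finset.sum_sub_distrib]
      apply Finset.sum_le_sum
      intro i _
      have := abs_sub_abs_le_abs_sub (x i) (x' i)
      rw [abs_sub_comm] at this
      linarith
    have h3 : ∑ i ∈ Sᶜ, |x' i - x i| = ∑ i ∈ Sᶜ, |x' i| := by
      apply Finset.sum_congr rfl
      intro i hi
      simp [hxc i hi]
    linarith
  have habs : ∑ i, |x' i - x i| ≤ 2 * ∑ i ∈ S, |x' i - x i| := by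
    rw [hsplit (fun i => |x' i - x i|)]; linarith
  have hcs : (∑ i ∈ S, |x' i - x i|) ^ 2 ≤ (S.card : ℝ) * ∑ i ∈ S, (x' i - x i) ^ 2 := by
    have := sq_sum_le_card_mul_sum_sq (s := S) (f := fun i => |x' i - x i|)
    simpa [sq_abs] using this
  have hcard : (S.card : ℝ) ≤ (s : ℝ) := by exact_mod_cast hs
  have hsum_nn : (0:ℝ) ≤ ∑ i ∈ S, (x' i - x i) ^ 2 := by positivity
  have hsub : ∑ i ∈ S, (x' i - x i) ^ 2 ≤ ∑ i, (x' i - x i) ^ 2 := by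
    apply Finset.sum_le_sum_of_subset_of_nonneg (Finset.subset_univ S)
    intro i _ _; positivity
  have hL : (0:ℝ) ≤ ∑ i, |x' i - x i| := Finset.sum_nonneg fun i _ => abs_nonneg _
  calc (∑ i, |x' i - x i|) ^ 2 ≤ (2 * ∑ i ∈ S, |x' i - x i|) ^ 2 := by
        apply pow_le_pow_left₀ hL habs
    _ = 4 * (∑ i ∈ S, |x' i - x i|) ^ 2 := by ring
    _ ≤ 4 * ((S.card : ℝ) * ∑ i ∈ S, (x' i - x i) ^ 2) := by linarith
    _ ≤ 4 * ((s : ℝ) * ∑ i, (x' i - x i) ^ 2) := by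
        apply mul_le_mul_of_nonneg_left _ (by norm_num)
        apply mul_le_mul hcard hsub hsum_nn (Nat.cast_nonneg s)
    _ = 4 * (s : ℝ) * ∑ i, (x' i - x i) ^ 2 := by ring
end

section
/- Let Φ ∈ ℝ^{m×n}, s ≥ 1, e ∈ (0,1), ξ > 0, and suppose Φ is (e, 4s)-restricted well-conditioned in the sense that for every 4s-numerically sparse vector v ∈ ℝ^n (i.e., ‖v‖₁² ≤ 4s‖v‖₂²) one has (1−e)·‖v‖₂² ≤ ‖Φv‖₂² ≤ (1+e)·‖v‖₂². Let θ* ∈ ℝ^n be s-sparse, let b = Φθ* + w with ‖w‖₁ ≤ ξ, and let θ̂ ∈ ℝ^n satisfy both ‖Φθ̂ − b‖₁ ≤ ξ and ‖θ̂‖₁ ≤ ‖θ*‖₁ (e.g., θ̂ is a minimizer of ‖θ‖₁ over {θ : ‖Φθ − b‖₁ ≤ ξ}). Then ‖θ̂ − θ*‖₁ ≤ (4√s/√(1−e))·ξ. -/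
/-- **ℓ1 error guarantee from sparse recovery (Lemma 19 of the paper).**
Suppose `Φ` is `(e,4s)`-restricted well-conditioned, `θ*` is `s`-sparse,
`b = Φθ* + w` with `‖w‖₁ ≤ ξ`, and `θ̂` is feasible (`‖Φθ̂ - b‖₁ ≤ ξ`) with
`‖θ̂‖₁ ≤ ‖θ*‖₁`.  Then `‖θ̂ - θ*‖₁ ≤ (4√s/√(1-e))·ξ`. -/
theorem sparse_recovery_l1_error
    (m n s : ℕ) (hs : 1 ≤ s) (e ξ : ℝ) (he : e ∈ Set.Ioo (0 : ℝ) 1) (hξ : 0 < ξ)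
    (Φ : Matrix (Fin m) (Fin n) ℝ)
    (hRWC : ∀ v : Fin n → ℝ, (∑ i, |v i|) ^ 2 ≤ 4 * (s : ℝ) * ∑ i, (v i) ^ 2 →
      (1 - e) * ∑ i, (v i) ^ 2 ≤ ∑ j, (Φ.mulVec v j) ^ 2
      ∧ ∑ j, (Φ.mulVec v j) ^ 2 ≤ (1 + e) * ∑ i, (v i) ^ 2)
    (θs : Fin n → ℝ) (hθs : (Finset.univ.filter fun i => θs i ≠ 0).card ≤ s)
    (w : Fin m → ℝ) (hw : ∑ j, |w j| ≤ ξ)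
    (b : Fin m → ℝ) (hb : b = Φ.mulVec θs + w)
    (θh : Fin n → ℝ)
    (hfeas : ∑ j, |Φ.mulVec θh j - b j| ≤ ξ)
    (hmin : ∑ i, |θh i| ≤ ∑ i, |θs i|) :
    ∑ i, |θh i - θs i| ≤ 4 * Real.sqrt s / Real.sqrt (1 - e) * ξ := by
  obtain ⟨he0, he1⟩ := he
  have h1e : (0:ℝ) < 1 - e := by linarith
  set h : Fin n → ℝ := fun i => θh i - θs i with hhdef
  set S : Finset (Fin n) := Finset.univ.filter (fun i => θs i ≠ 0) with hSdef
  have hoff : ∀ i ∈ Sᶜ, θs i = 0 := by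
    intro i hi
    simp [hSdef, Finset.mem_compl, Finset.mem_filter] at hi
    exact hi
  -- cone condition
  have hcone : ∑ i ∈ Sᶜ, |h i| ≤ ∑ i ∈ S, |h i| := by
    have e1 : ∑ i ∈ S, |θh i| + ∑ i ∈ Sᶜ, |θh i| = ∑ i, |θh i| :=
      Finset.sum_add_sum_compl S _
    have e2 : ∑ i ∈ S, |θs i| + ∑ i ∈ Sᶜ, |θs i| = ∑ i, |θs i| :=
      Finset.sum_add_sum_compl S _
    have e3 : ∑ i ∈ Sᶜ, |θs i| = 0 :=
      Finset.sum_eq_zero fun i hi => by rw [hoff i hi]; simp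
    have e4 : ∑ i ∈ Sᶜ, |θh i| = ∑ i ∈ Sᶜ, |h i| :=
      Finset.sum_congr rfl fun i hi => by simp [hhdef, hoff i hi]
    have e5 : ∑ i ∈ S, |θs i| - ∑ i ∈ S, |h i| ≤ ∑ i ∈ S, |θh i| := by
      rw [← Finset.sum_sub_distrib]
      refine Finset.sum_le_sum fun i _ => ?_
      have t1 : |θs i| - |θh i| ≤ |θs i - θh i| := abs_sub_abs_le_abs_sub _ _
      have t2 : |h i| = |θs i - θh i| := by
        simp only [hhdef]; rw [abs_sub_comm]
      linarith
    linarith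
  have hL1 : ∑ i, |h i| ≤ 2 * ∑ i ∈ S, |h i| := by
    rw [← Finset.sum_add_sum_compl S]; linarith
  -- Cauchy-Schwarz on S
  have hCS : (∑ i ∈ S, |h i|) ^ 2 ≤ (S.card : ℝ) * ∑ i ∈ S, (h i) ^ 2 := by
    have := Finset.sum_mul_sq_le_sq_mul_sq S (fun _ => (1:ℝ)) (fun i => |h i|)
    simpa [sq_abs] using this
  have hsub : ∑ i ∈ S, (h i) ^ 2 ≤ ∑ i, (h i) ^ 2 :=
    Finset.sum_le_sum_of_subset_of_nonneg (Finset.subset_univ S)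
      (fun i _ _ => sq_nonneg _)
  have hcard : (S.card : ℝ) ≤ (s : ℝ) := by exact_mod_cast hθs
  have hSsq : (0:ℝ) ≤ ∑ i ∈ S, (h i) ^ 2 :=
    Finset.sum_nonneg fun i _ => sq_nonneg _
  have hns : (∑ i, |h i|) ^ 2 ≤ 4 * (s : ℝ) * ∑ i, (h i) ^ 2 := by
    have hAnn : (0:ℝ) ≤ ∑ i, |h i| := Finset.sum_nonneg fun i _ => abs_nonneg _
    have step1 : (∑ i, |h i|) ^ 2 ≤ (2 * ∑ i ∈ S, |h i|) ^ 2 :=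
      pow_le_pow_left₀ hAnn hL1 2
    have step3 : (S.card : ℝ) * ∑ i ∈ S, (h i) ^ 2 ≤ (s : ℝ) * ∑ i ∈ S, (h i) ^ 2 :=
      mul_le_mul_of_nonneg_right hcard hSsq
    have step4 : (s : ℝ) * ∑ i ∈ S, (h i) ^ 2 ≤ (s : ℝ) * ∑ i, (h i) ^ 2 :=
      mul_le_mul_of_nonneg_left hsub (by positivity)
    nlinarith [step1, hCS, step3, step4]
  have hlow := (hRWC h hns).1
  -- bound on Φ h
  have hΦh : ∀ j, Φ.mulVec h j = (Φ.mulVec θh j - b j) + w j := by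
    intro j
    have : Φ.mulVec h = Φ.mulVec θh - Φ.mulVec θs := by
      rw [hhdef, ← Matrix.mulVec_sub]
      rfl
    rw [this]
    simp [hb]
    ring
  have hΦl1 : ∑ j, |Φ.mulVec h j| ≤ 2 * ξ := by
    have : ∀ j, |Φ.mulVec h j| ≤ |Φ.mulVec θh j - b j| + |w j| := by
      intro j; rw [hΦh j]; exact abs_add_le _ _
    calc ∑ j, |Φ.mulVec h j| ≤ ∑ j, (|Φ.mulVec θh j - b j| + |w j|) :=
          Finset.sum_le_sum fun j _ => this j
      _ = (∑ j, |Φ.mulVec θh j - b j|) + ∑ j, |w j| := Finset.sum_add_distrib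
      _ ≤ 2 * ξ := by linarith
  have hΦsq : ∑ j, (Φ.mulVec h j) ^ 2 ≤ (∑ j, |Φ.mulVec h j|) ^ 2 := by
    have := Finset.sum_sq_le_sq_sum_of_nonneg
      (s := (Finset.univ : Finset (Fin m))) (f := fun j => |Φ.mulVec h j|)
      (fun j _ => abs_nonneg _)
    simpa [sq_abs] using this
  have hΦnn : (0:ℝ) ≤ ∑ j, |Φ.mulVec h j| := Finset.sum_nonneg fun j _ => abs_nonneg _
  have hB : (1 - e) * ∑ i, (h i) ^ 2 ≤ 4 * ξ ^ 2 := by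
    nlinarith [hΦl1, hΦsq, hlow, hΦnn]
  -- finish
  have hAnn : (0:ℝ) ≤ ∑ i, |h i| := Finset.sum_nonneg fun i _ => abs_nonneg _
  have hBnn : (0:ℝ) ≤ ∑ i, (h i) ^ 2 := Finset.sum_nonneg fun i _ => sq_nonneg _
  have hss : Real.sqrt s ^ 2 = (s:ℝ) := Real.sq_sqrt (by positivity)
  have hes : Real.sqrt (1 - e) ^ 2 = 1 - e := Real.sq_sqrt h1e.le
  have hesp : (0:ℝ) < Real.sqrt (1 - e) := Real.sqrt_pos.mpr h1e
  have hsp : (0:ℝ) < Real.sqrt s := Real.sqrt_pos.mpr (by exact_mod_cast hs)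
  have hRpos : (0:ℝ) ≤ 4 * Real.sqrt s / Real.sqrt (1 - e) * ξ := by positivity
  have hsq : (∑ i, |h i|) ^ 2 ≤ (4 * Real.sqrt s / Real.sqrt (1 - e) * ξ) ^ 2 := by
    have expand : (4 * Real.sqrt s / Real.sqrt (1 - e) * ξ) ^ 2
        = 16 * (s:ℝ) * ξ ^ 2 / (1 - e) := by
      have r1 : (4 * Real.sqrt s / Real.sqrt (1 - e) * ξ) ^ 2
          = 16 * Real.sqrt s ^ 2 * ξ ^ 2 / Real.sqrt (1 - e) ^ 2 := by ring
      rw [r1, hss, hes]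
    rw [expand, le_div_iff₀ h1e]
    have p1 : (∑ i, |h i|) ^ 2 * (1 - e) ≤ (4 * (s:ℝ) * ∑ i, (h i) ^ 2) * (1 - e) :=
      mul_le_mul_of_nonneg_right hns h1e.le
    have p2 : (4 * (s:ℝ)) * ((1 - e) * ∑ i, (h i) ^ 2) ≤ (4 * (s:ℝ)) * (4 * ξ ^ 2) :=
      mul_le_mul_of_nonneg_left hB (by positivity)
    nlinarith [p1, p2]
  calc ∑ i, |h i| = Real.sqrt ((∑ i, |h i|) ^ 2) := (Real.sqrt_sq hAnn).symm
    _ ≤ Real.sqrt ((4 * Real.sqrt s / Real.sqrt (1 - e) * ξ) ^ 2) :=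
        Real.sqrt_le_sqrt hsq
    _ = 4 * Real.sqrt s / Real.sqrt (1 - e) * ξ := Real.sqrt_sq hRpos
end

section
/- Let 𝒳 be a nonempty type, n ≥ 1, and let M be a mechanism assigning to each dataset D ∈ 𝒳^n a probability measure M(D) on a measurable space Θ, satisfying ε-pure differential privacy with respect to replace-one neighbors: for all datasets D, D' ∈ 𝒳^n differing in exactly one coordinate and all measurable S, M(D)(S) ≤ exp(ε)·M(D')(S). Let K ≥ 2, let D₁,…,D_K ∈ 𝒳^n be datasets, and let E₁,…,E_K be pairwise disjoint measurable subsets of Θ such that M(D_j)(E_j) ≥ 1/2 for every j. Then log K ≤ n·ε + log 4. -/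
/-!
Group privacy: walking from `D` to `D'` one coordinate at a time gives
`M D S ≤ e^{ε·d(D, D')} M D' S`, with `d` the Hamming distance, hence `M D S ≤ e^{nε} M D' S`
for any two datasets. Comparing every `M(D_j)(E_j) ≥ 1/2` with one fixed probability measure
`M(D_{j₀})` and summing over the disjoint `E_j` gives `K/2 ≤ e^{nε}`.
-/

open MeasureTheory Function
open scoped ENNReal

theorem hammingDist_update_add_one {ι α : Type*} [Fintype ι] [DecidableEq ι] [DecidableEq α]
    {x y : ι → α} {i : ι} (h : x i ≠ y i) :
    hammingDist (update x i (y i)) y + 1 = hammingDist x y := by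
  have hset : ({j | update x i (y i) j ≠ y j} : Finset ι) =
      ({j | x j ≠ y j} : Finset ι).erase i := by
    ext j
    by_cases hj : j = i
    · subst hj; simp
    · simp [hj]
  rw [hammingDist, hammingDist, hset, Finset.card_erase_add_one (by simpa using h)]

theorem measure_le_pow_hammingDist_mul {ι α Θ : Type*} [Fintype ι] [DecidableEq α]
    [MeasurableSpace Θ] {M : (ι → α) → Measure Θ} {c : ℝ≥0∞}
    (hM : ∀ D D' : ι → α, (∃ i, D i ≠ D' i ∧ ∀ j, j ≠ i → D j = D' j) →
      ∀ S : Set Θ, MeasurableSet S → M D S ≤ c * M D' S)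
    {S : Set Θ} (hS : MeasurableSet S) (D D' : ι → α) :
    M D S ≤ c ^ hammingDist D D' * M D' S := by
  classical
  induction hd : hammingDist D D' generalizing D with
  | zero => rw [hammingDist_eq_zero.1 hd, pow_zero, one_mul]
  | succ k ih =>
    have hne : D ≠ D' := hammingDist_pos.1 (by omega)
    obtain ⟨i, hi⟩ := ne_iff.1 hne
    let D'' := update D i (D' i)
    have hneighbor : ∃ i, D i ≠ D'' i ∧ ∀ j, j ≠ i → D j = D'' j :=
      ⟨i, by simpa [D''] using hi, fun j hj => (update_of_ne hj _ _).symm⟩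
    have hdist : hammingDist D'' D' = k :=
      Nat.add_right_cancel ((hammingDist_update_add_one hi).trans hd)
    calc M D S ≤ c * M D'' S := hM D D'' hneighbor S hS
      _ ≤ c * (c ^ k * M D' S) := by gcongr; exact ih D'' hdist
      _ = c ^ (k + 1) * M D' S := by ring

theorem sum_measure_le_of_forall_le_mul {ι Θ : Type*} [MeasurableSpace Θ] [Fintype ι]
    {μ : ι → Measure Θ} [∀ j, IsProbabilityMeasure (μ j)] {E : ι → Set Θ}
    (hE : ∀ j, MeasurableSet (E j)) (hdisj : Pairwise (Disjoint on E)) {C : ℝ≥0∞}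
    (hC : ∀ j j', μ j (E j) ≤ C * μ j' (E j)) :
    ∑ j, μ j (E j) ≤ C := by
  cases isEmpty_or_nonempty ι with
  | inl _ => simp
  | inr h =>
    obtain ⟨j₀⟩ := h
    calc ∑ j, μ j (E j) ≤ ∑ j, C * μ j₀ (E j) := Finset.sum_le_sum fun j _ => hC j j₀
      _ = C * μ j₀ (⋃ j, E j) := by
        rw [← Finset.mul_sum, measure_iUnion hdisj hE, tsum_fintype]
      _ ≤ C := mul_le_of_le_one_right' prob_le_one

theorem packing_lower_bound_general
    {𝒳 : Type*} {Θ : Type*} [MeasurableSpace Θ]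
    (n : ℕ) (ε : ℝ) (hε : 0 ≤ ε)
    (M : (Fin n → 𝒳) → Measure Θ)
    (hMprob : ∀ D, IsProbabilityMeasure (M D))
    (hDP : ∀ D D' : Fin n → 𝒳,
      (∃ i, D i ≠ D' i ∧ ∀ j, j ≠ i → D j = D' j) →
      ∀ S : Set Θ, MeasurableSet S → M D S ≤ ENNReal.ofReal (Real.exp ε) * M D' S)
    (K : ℕ)
    (D : Fin K → Fin n → 𝒳) (E : Fin K → Set Θ)
    (hE : ∀ j, MeasurableSet (E j))
    (hdisj : ∀ j j', j ≠ j' → Disjoint (E j) (E j'))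
    (hacc : ∀ j, ENNReal.ofReal (1 / 2) ≤ M (D j) (E j)) :
    Real.log K ≤ (n : ℝ) * ε + Real.log 4 := by
  classical
  set c := ENNReal.ofReal (Real.exp ε)
  have hgroup : ∀ D₁ D₂ S, MeasurableSet S → M D₁ S ≤ c ^ n * M D₂ S := fun D₁ D₂ S hS =>
    calc M D₁ S ≤ c ^ hammingDist D₁ D₂ * M D₂ S := measure_le_pow_hammingDist_mul hDP hS D₁ D₂
      _ ≤ c ^ n * M D₂ S := by
        gcongr
        · exact ENNReal.one_le_ofReal.2 (Real.one_le_exp hε)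
        · exact hammingDist_le_card_fintype.trans_eq (Fintype.card_fin n)
  have hsum : ∑ j, M (D j) (E j) ≤ c ^ n :=
    sum_measure_le_of_forall_le_mul (μ := fun j => M (D j)) hE hdisj
      fun j j' => hgroup _ _ _ (hE j)
  have hK : (K : ℝ) * (1 / 2) ≤ Real.exp (n * ε) := by
    have h := (Finset.card_nsmul_le_sum _ _ _ fun j _ => hacc j).trans hsum
    rwa [nsmul_eq_mul, Finset.card_univ, Fintype.card_fin, ← ENNReal.ofReal_natCast,
      ← ENNReal.ofReal_mul (Nat.cast_nonneg K), ← ENNReal.ofReal_pow (Real.exp_nonneg ε),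
      ← Real.exp_nat_mul, ENNReal.ofReal_le_ofReal_iff (Real.exp_nonneg _)] at h
  rcases K.eq_zero_or_pos with rfl | hKpos
  · simp only [CharP.cast_eq_zero, Real.log_zero]
    positivity
  calc Real.log K ≤ Real.log (4 * Real.exp (n * ε)) :=
        Real.log_le_log (by positivity) (by linarith [Real.exp_pos (n * ε)])
    _ = n * ε + Real.log 4 := by
        rw [Real.log_mul (by norm_num) (Real.exp_ne_zero _), Real.log_exp, add_comm]

/-- **Packing lower bound for pure DP (the packing argument of Section 7).**
If `M` is an `ε`-pure DP mechanism on datasets in `𝒳^n` (replace-one neighbors), and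
`D₁,…,D_K` are datasets with pairwise disjoint measurable sets `E₁,…,E_K` such that
`M(D_j)(E_j) ≥ 1/2` for each `j`, then `log K ≤ n·ε + log 4`. -/
theorem packing_lower_bound
    {𝒳 : Type*} {Θ : Type*} [MeasurableSpace Θ]
    (n : ℕ) (hn : 1 ≤ n) (ε : ℝ) (hε : 0 ≤ ε)
    (M : (Fin n → 𝒳) → Measure Θ)
    (hMprob : ∀ D, IsProbabilityMeasure (M D))
    (hDP : ∀ D D' : Fin n → 𝒳,
      (∃ i, D i ≠ D' i ∧ ∀ j, j ≠ i → D j = D' j) →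
      ∀ S : Set Θ, MeasurableSet S → M D S ≤ ENNReal.ofReal (Real.exp ε) * M D' S)
    (K : ℕ) (hK : 2 ≤ K)
    (D : Fin K → Fin n → 𝒳) (E : Fin K → Set Θ)
    (hE : ∀ j, MeasurableSet (E j))
    (hdisj : ∀ j j', j ≠ j' → Disjoint (E j) (E j'))
    (hacc : ∀ j, ENNReal.ofReal (1 / 2) ≤ M (D j) (E j)) :
    Real.log K ≤ (n : ℝ) * ε + Real.log 4 :=
  packing_lower_bound_general n ε hε M hMprob hDP K D E hE hdisj hacc
end

section
/- Let d ≥ 1 and 0 < r ≤ R, and let x = (R, 0, …, 0) ∈ ℝ^d. Then the Lebesgue volume of the intersection {z ∈ ℝ^d : ‖z‖₁ ≤ R and ‖z − x‖₁ ≤ r} equals r^d/d!. In particular, since the ℓ1-ball {z : ‖z − x‖₁ ≤ r} has Lebesgue volume (2r)^d/d!, the intersection is exactly a 2^{−d} fraction of the volume of this ball. -/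
open MeasureTheory
open scoped ENNReal

/-- Volume of a centered ℓ1-ball in `Fin d → ℝ`. -/
lemma l1_centered_ball_volume (d : ℕ) (hd : 0 < d) (ρ : ℝ) (hρ : 0 ≤ ρ) :
    volume {x : Fin d → ℝ | (∑ i, |x i|) ≤ ρ}
      = ENNReal.ofReal ((2 * ρ) ^ d / (Nat.factorial d : ℝ)) := by
  have : Nonempty (Fin d) := ⟨⟨0, hd⟩⟩
  have h := MeasureTheory.volume_sum_rpow_le (Fin d) (p := 1) le_rfl ρ
  simp only [Real.rpow_one, one_div_one, Real.rpow_natCast, Fintype.card_fin,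
    div_one, Real.Gamma_two, mul_one] at h
  rw [show (1:ℝ)+1 = 2 by norm_num, Real.Gamma_two, Real.Gamma_nat_eq_factorial,
    mul_one, ← ENNReal.ofReal_pow hρ, ← ENNReal.ofReal_mul (by positivity)] at h
  rw [h]
  congr 1
  rw [mul_pow]
  ring

/-- Volume of a translated ℓ1-ball. -/
lemma l1_ball_volume (d : ℕ) (hd : 0 < d) (c : Fin d → ℝ) (ρ : ℝ) (hρ : 0 ≤ ρ) :
    volume {z : Fin d → ℝ | (∑ i, |z i - c i|) ≤ ρ}
      = ENNReal.ofReal ((2 * ρ) ^ d / (Nat.factorial d : ℝ)) := by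
  have hset : {z : Fin d → ℝ | (∑ i, |z i - c i|) ≤ ρ}
      = (fun z : Fin d → ℝ => z + (-c)) ⁻¹' {x : Fin d → ℝ | (∑ i, |x i|) ≤ ρ} := by
    ext z
    simp [sub_eq_add_neg]
  rw [hset, measure_preimage_add_right, l1_centered_ball_volume d hd ρ hρ]

/-- **Volume of the intersection of two ℓ1-balls with touching centers
(Appendix D of the paper).**
For `0 < r ≤ R` and `x = (R,0,…,0)`, the set
`{z : ‖z‖₁ ≤ R, ‖z - x‖₁ ≤ r}` has Lebesgue volume `r^d/d!`, which is exactly a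
`2^{-d}` fraction of the volume `(2r)^d/d!` of the ℓ1-ball `{z : ‖z - x‖₁ ≤ r}`. -/
theorem l1_ball_intersection_volume
    (d : ℕ) (hd : 0 < d) (r R : ℝ) (hr : 0 < r) (hR : r ≤ R) :
    volume {z : Fin d → ℝ |
        (∑ i, |z i|) ≤ R
        ∧ (∑ i, |z i - (if i = (⟨0, hd⟩ : Fin d) then R else 0)|) ≤ r}
      = ENNReal.ofReal (r ^ d / (Nat.factorial d : ℝ))
    ∧ volume {z : Fin d → ℝ |
        (∑ i, |z i - (if i = (⟨0, hd⟩ : Fin d) then R else 0)|) ≤ r}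
      = ENNReal.ofReal ((2 * r) ^ d / (Nat.factorial d : ℝ)) := by
  set i0 : Fin d := ⟨0, hd⟩
  have hsplit : ∀ (c : ℝ) (z : Fin d → ℝ),
      (∑ i, |z i - (if i = i0 then c else 0)|)
        = |z i0 - c| + ∑ i ∈ Finset.univ.erase i0, |z i| := by
    intro c z
    rw [← Finset.add_sum_erase _ _ (Finset.mem_univ i0), if_pos rfl]
    congr 1
    refine Finset.sum_congr rfl fun i hi => ?_
    rw [if_neg (Finset.ne_of_mem_erase hi), sub_zero]
  constructor
  · have hset : {z : Fin d → ℝ |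
        (∑ i, |z i|) ≤ R
        ∧ (∑ i, |z i - (if i = i0 then R else 0)|) ≤ r}
        = {z : Fin d → ℝ |
            (∑ i, |z i - (if i = i0 then R - r / 2 else 0)|) ≤ r / 2} := by
      ext z
      have h0 : (∑ i, |z i|) = |z i0| + ∑ i ∈ Finset.univ.erase i0, |z i| := by
        have h := hsplit 0 z; simp only [sub_zero, ite_self] at h; exact h
      have hs : 0 ≤ ∑ i ∈ Finset.univ.erase i0, |z i| :=
        Finset.sum_nonneg fun i _ => abs_nonneg _
      set s := ∑ i ∈ Finset.univ.erase i0, |z i|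
      set a := z i0
      simp only [Set.mem_setOf_eq, hsplit R z, hsplit (R - r / 2) z, h0]
      constructor
      · rintro ⟨h1, h2⟩
        have ha1 := le_abs_self a
        have ha2 := le_abs_self (a - R)
        have ha3 := neg_abs_le (a - R)
        have : |a - (R - r / 2)| ≤ r / 2 - s :=
          abs_le.mpr ⟨by linarith, by linarith⟩
        linarith
      · intro h
        obtain ⟨hl, hu⟩ := abs_le.mp (show |a - (R - r / 2)| ≤ r / 2 - s by linarith)
        constructor
        · have : |a| ≤ R - s := abs_le.mpr ⟨by linarith, by linarith⟩
          linarith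
        · have : |a - R| ≤ r - s := abs_le.mpr ⟨by linarith, by linarith⟩
          linarith
    rw [hset, l1_ball_volume d hd (fun i => if i = i0 then R - r / 2 else 0) (r / 2)
      (by linarith)]
    rw [show 2 * (r / 2) = r by ring]
  · exact l1_ball_volume d hd (fun i => if i = i0 then R else 0) r hr.le
end
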